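/- arXiv:2212.11343 — 5 statements merged into one kernel-verified Lean document; each statement's English description precedes it below -/
import Mathlib

section
/- Conversely, if a filter h = (h(0),...,h(K)) with h(0) = 1 satisfies Σ_{i=0}^{K} h(i) f̂(l - i) = 0 for all l ∈ ℤ, where f̂(λ) = Σ_{k=0}^{K-1} a_k u_k^λ with distinct u_k on the unit circle and all a_k ≠ 0, then each u_k is a root of the polynomial H(z) = Σ_{i=0}^{K} h(i) z^{K-i}. -/
/-! Pulling out the factor `u ^ l` turns the annihilation identities into
`∑ₖ aₖ H(uₖ) uₖ ^ l = 0` with `H(z) = ∑ᵢ hᵢ z⁻ⁱ`; taking `l = 0, …, K - 1` gives a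
Vandermonde system in the distinct nodes `uₖ`, so every `aₖ H(uₖ)` vanishes, and
`aₖ ≠ 0` leaves `H(uₖ) = 0`, i.e. `uₖ ^ K H(uₖ) = 0`. -/

open Finset

section FilterResponse

variable {F : Type*} [Semifield F]

theorem sum_mul_zpow_sub (s : Finset ℕ) (h : ℕ → F) {z : F} (hz : z ≠ 0) (l : ℤ) :
    ∑ i ∈ s, h i * z ^ (l - i) = z ^ l * ∑ i ∈ s, h i * z ^ (-(i : ℤ)) := by
  rw [mul_sum]
  refine sum_congr rfl fun i _ => ?_
  rw [zpow_sub₀ hz, zpow_neg, div_eq_mul_inv]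
  ring

theorem sum_mul_sum_mul_zpow_sub {ι : Type*} [Fintype ι] (s : Finset ℕ) (h : ℕ → F)
    (a u : ι → F) (hu : ∀ k, u k ≠ 0) (l : ℤ) :
    ∑ i ∈ s, h i * ∑ k, a k * u k ^ (l - i) =
      ∑ k, a k * (∑ i ∈ s, h i * u k ^ (-(i : ℤ))) * u k ^ l := by
  have hfactor : ∀ k, a k * (∑ i ∈ s, h i * u k ^ (-(i : ℤ))) * u k ^ l =
      ∑ i ∈ s, h i * (a k * u k ^ (l - i)) := by
    intro k
    rw [mul_right_comm, mul_assoc, ← sum_mul_zpow_sub s h (hu k), mul_sum]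
    exact sum_congr rfl fun i _ => by ring
  simp_rw [hfactor, mul_sum]
  exact sum_comm

end FilterResponse

theorem stmt2_general (K : ℕ)
    (u : Fin K → ℂ) (hmod : ∀ k, ‖u k‖ = 1) (hdist : Function.Injective u)
    (a : Fin K → ℂ) (ha : ∀ k, a k ≠ 0)
    (h : ℕ → ℂ)
    (hann : ∀ l : ℤ,
      ∑ i ∈ Finset.range (K + 1), h i * (∑ k, a k * u k ^ (l - (i : ℤ))) = 0) :
    ∀ k, ∑ i ∈ Finset.range (K + 1), h i * u k ^ ((K : ℤ) - (i : ℤ)) = 0 := by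
  have hu : ∀ k, u k ≠ 0 := fun k => norm_ne_zero_iff.mp (by simp [hmod])
  set H : Fin K → ℂ := fun k => ∑ i ∈ range (K + 1), h i * u k ^ (-(i : ℤ))
  have hweights : (fun k => a k * H k) = 0 :=
    Matrix.eq_zero_of_forall_pow_sum_mul_pow_eq_zero hdist fun j => by
      have := hann j
      rwa [sum_mul_sum_mul_zpow_sub _ h a u hu] at this
  intro k
  rw [sum_mul_zpow_sub _ h (hu k)]
  exact mul_eq_zero_of_right _ ((mul_eq_zero.mp (congrFun hweights k)).resolve_left (ha k))

/-- Converse: any annihilating filter with h(0)=1 has every u_k as a root of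
its polynomial H(z) = Σ h(i) z^{K-i}. -/
theorem stmt2 (K : ℕ) (hK : 1 ≤ K)
    (u : Fin K → ℂ) (hmod : ∀ k, ‖u k‖ = 1) (hdist : Function.Injective u)
    (a : Fin K → ℂ) (ha : ∀ k, a k ≠ 0)
    (h : ℕ → ℂ) (h0 : h 0 = 1)
    (hann : ∀ l : ℤ,
      ∑ i ∈ Finset.range (K + 1), h i * (∑ k, a k * u k ^ (l - (i : ℤ))) = 0) :
    ∀ k, ∑ i ∈ Finset.range (K + 1), h i * u k ^ ((K : ℤ) - (i : ℤ)) = 0 :=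
  stmt2_general K u hmod hdist a ha h hann
end

section
/- A K-term exponential sum f̂(λ) = Σ_{k=0}^{K-1} a_k u_k^λ with distinct unit-modulus u_k and nonzero a_k is uniquely determined by its 2K consecutive values f̂(-K+1),...,f̂(K): if two such parameterizations (a_k, u_k) and (a'_k, u'_k) give the same 2K values, then {(a_k, u_k)} = {(a'_k, u'_k)} as multisets. -/
open Complex

/-- Vandermonde kill lemma over an arbitrary fintype, with integer exponents. -/
lemma vand_kill {ι : Type*} [Fintype ι] (v : ι → ℂ) (hv : Function.Injective v)
    (hv0 : ∀ i, v i ≠ 0) (c : ι → ℂ) (l0 : ℤ)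
    (h : ∀ m : ℕ, m < Fintype.card ι → ∑ i, c i * v i ^ (l0 + m) = 0) : ∀ i, c i = 0 := by
  classical
  set n := Fintype.card ι with hn
  let e : ι ≃ Fin n := Fintype.equivFin ι
  set v' : Fin n → ℂ := v ∘ e.symm with hv'
  set c' : Fin n → ℂ := fun i => c (e.symm i) * v (e.symm i) ^ l0 with hc'
  have hinj : Function.Injective v' := hv.comp e.symm.injective
  have hkey : ∀ m : Fin n, ∑ i, c' i * v' i ^ (m : ℕ) = 0 := by
    intro m
    have := h m m.2
    rw [← Equiv.sum_comp e.symm (fun j => c j * v j ^ (l0 + (m : ℕ)))] at this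
    rw [← this]
    apply Finset.sum_congr rfl
    intro i _
    simp only [hc', hv', Function.comp_apply]
    rw [mul_assoc, ← zpow_natCast (v (e.symm i)) (m : ℕ), ← zpow_add₀ (hv0 _)]
  have := Matrix.eq_zero_of_forall_pow_sum_mul_pow_eq_zero hinj hkey
  intro i
  have h0 : c' (e i) = 0 := by rw [this]; rfl
  simp only [hc', Equiv.symm_apply_apply] at h0
  rcases mul_eq_zero.mp h0 with h | h
  · exact h
  · exact absurd h (zpow_ne_zero _ (hv0 i))

/-- A K-term exponential sum with distinct unit-modulus nodes and nonzero weights is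
uniquely determined (as a multiset of pairs) by 2K consecutive values. -/
theorem stmt6 (K : ℕ) (hK : 1 ≤ K)
    (u u' : Fin K → ℂ) (hu : ∀ k, ‖u k‖ = 1) (hu' : ∀ k, ‖u' k‖ = 1)
    (hdist : Function.Injective u) (hdist' : Function.Injective u')
    (a a' : Fin K → ℂ) (ha : ∀ k, a k ≠ 0) (ha' : ∀ k, a' k ≠ 0)
    (heq : ∀ lam : ℤ, lam ∈ Finset.Icc (-(K : ℤ) + 1) (K : ℤ) →
      ∑ k, a k * u k ^ lam = ∑ k, a' k * u' k ^ lam) :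
    Multiset.map (fun k => (a k, u k)) Finset.univ.val
      = Multiset.map (fun k => (a' k, u' k)) Finset.univ.val := by
  classical
  have hu0 : ∀ k, u k ≠ 0 := fun k => by
    intro h; have := hu k; rw [h] at this; simp at this
  have hu'0 : ∀ k, u' k ≠ 0 := fun k => by
    intro h; have := hu' k; rw [h] at this; simp at this
  -- combined node set
  set S : Finset ℂ := Finset.image u Finset.univ ∪ Finset.image u' Finset.univ with hS
  have hScard : S.card ≤ 2 * K := by
    calc S.card ≤ (Finset.image u Finset.univ).card + (Finset.image u' Finset.univ).card :=
          Finset.card_union_le _ _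
      _ ≤ K + K := by
          gcongr <;> simpa using (Finset.card_image_le.trans (by simp))
      _ = 2 * K := by ring
  -- coefficients on S
  set c : ℂ → ℂ := fun z =>
    (∑ k ∈ Finset.univ.filter (fun k => u k = z), a k)
      - (∑ k ∈ Finset.univ.filter (fun k => u' k = z), a' k) with hc
  have hsum : ∀ lam : ℤ, lam ∈ Finset.Icc (-(K : ℤ) + 1) (K : ℤ) →
      ∑ z ∈ S, c z * z ^ lam = 0 := by
    intro lam hlam
    have h1 : ∑ z ∈ S, (∑ k ∈ Finset.univ.filter (fun k => u k = z), a k) * z ^ lam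
        = ∑ k, a k * u k ^ lam := by
      rw [← Finset.sum_fiberwise_of_maps_to (g := u) (t := S)
        (fun k _ => Finset.mem_union_left _ (Finset.mem_image_of_mem u (Finset.mem_univ k)))
        (fun k => a k * u k ^ lam)]
      apply Finset.sum_congr rfl
      intro z _
      rw [Finset.sum_mul]
      apply Finset.sum_congr rfl
      intro k hk
      rw [(Finset.mem_filter.mp hk).2]
    have h2 : ∑ z ∈ S, (∑ k ∈ Finset.univ.filter (fun k => u' k = z), a' k) * z ^ lam
        = ∑ k, a' k * u' k ^ lam := by
      rw [← Finset.sum_fiberwise_of_maps_to (g := u') (t := S)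
        (fun k _ => Finset.mem_union_right _ (Finset.mem_image_of_mem u' (Finset.mem_univ k)))
        (fun k => a' k * u' k ^ lam)]
      apply Finset.sum_congr rfl
      intro z _
      rw [Finset.sum_mul]
      apply Finset.sum_congr rfl
      intro k hk
      rw [(Finset.mem_filter.mp hk).2]
    simp only [hc, sub_mul, Finset.sum_sub_distrib, h1, h2, heq lam hlam, sub_self]
  -- apply vandermonde kill on the subtype ↥S
  have hz0 : ∀ z ∈ S, z ≠ 0 := by
    intro z hz
    rcases Finset.mem_union.mp hz with h | h <;>
      · obtain ⟨k, _, rfl⟩ := Finset.mem_image.mp h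
        first | exact hu0 k | exact hu'0 k
  have hckill : ∀ z ∈ S, c z = 0 := by
    intro z hz
    have hcard' : Fintype.card ↥S = S.card := Fintype.card_coe S
    have := vand_kill (fun x : ↥S => (x : ℂ)) Subtype.coe_injective
      (fun x => hz0 x x.2) (fun x : ↥S => c x) (-(K : ℤ) + 1) ?_ ⟨z, hz⟩
    · exact this
    · intro m hm
      rw [hcard'] at hm
      have hmem : (-(K : ℤ) + 1 + m) ∈ Finset.Icc (-(K : ℤ) + 1) (K : ℤ) := by
        rw [Finset.mem_Icc]
        constructor
        · omega
        · have : (m : ℤ) < 2 * K := by exact_mod_cast lt_of_lt_of_le hm hScard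
          omega
      have := hsum _ hmem
      rw [← this, ← Finset.sum_coe_sort S (fun z => c z * z ^ (-(K : ℤ) + 1 + m))]
  -- build the matching
  have hmatch : ∀ k : Fin K, ∃ j : Fin K, u' j = u k ∧ a' j = a k := by
    intro k
    have hzS : u k ∈ S := Finset.mem_union_left _ (Finset.mem_image_of_mem u (Finset.mem_univ k))
    have hc0 := hckill (u k) hzS
    have hfib : Finset.univ.filter (fun j => u j = u k) = {k} := by
      ext j
      simp only [Finset.mem_filter, Finset.mem_univ, true_and, Finset.mem_singleton]
      exact ⟨fun h => hdist h, fun h => by rw [h]⟩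
    rw [hc, sub_eq_zero, hfib, Finset.sum_singleton] at hc0
    have hne : (Finset.univ.filter (fun j => u' j = u k)).Nonempty := by
      by_contra h
      rw [Finset.not_nonempty_iff_eq_empty] at h
      rw [h, Finset.sum_empty] at hc0
      exact ha k hc0
    obtain ⟨j, hj⟩ := hne
    have hju : u' j = u k := (Finset.mem_filter.mp hj).2
    have hfib' : Finset.univ.filter (fun i => u' i = u k) = {j} := by
      ext i
      simp only [Finset.mem_filter, Finset.mem_univ, true_and, Finset.mem_singleton]
      exact ⟨fun h => hdist' (h.trans hju.symm), fun h => by rw [h, hju]⟩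
    rw [hfib', Finset.sum_singleton] at hc0
    exact ⟨j, hju, hc0.symm⟩
  choose σ hσu hσa using hmatch
  have hσinj : Function.Injective σ := by
    intro k k' h
    apply hdist
    rw [← hσu k, ← hσu k', h]
  let e : Equiv.Perm (Fin K) := Equiv.ofBijective σ ⟨hσinj, Finite.surjective_of_injective hσinj⟩
  have hperm : Multiset.map σ Finset.univ.val = Finset.univ.val := by
    have := Finset.map_univ_equiv e
    have h2 : Finset.map e.toEmbedding Finset.univ = Finset.univ := Finset.map_univ_equiv e
    calc Multiset.map σ Finset.univ.val = (Finset.map e.toEmbedding Finset.univ).val := rfl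
      _ = Finset.univ.val := by rw [h2]
  calc Multiset.map (fun k => (a k, u k)) Finset.univ.val
      = Multiset.map ((fun k => (a' k, u' k)) ∘ σ) Finset.univ.val := by
        apply Multiset.map_congr rfl
        intro k _
        simp only [Function.comp_apply, hσu k, hσa k]
    _ = Multiset.map (fun k => (a' k, u' k)) (Multiset.map σ Finset.univ.val) := by
        rw [Multiset.map_map]
    _ = Multiset.map (fun k => (a' k, u' k)) Finset.univ.val := by rw [hperm]
end

section
/- The Yule-Walker system A h = -b, where A_{p,q} = f̂(p - q) (p,q ∈ {0,...,K-1}) and b = (f̂(1),...,f̂(K))^T, with f̂(λ) = Σ_{k=0}^{K-1} a_k u_k^λ for distinct nonzero u_k and nonzero a_k, has a unique solution h ∈ ℂ^K, and this solution gives the coefficients h(1),...,h(K) of the monic annihilating polynomial Π_k (z - u_k) = z^K + h(1) z^{K-1} + ... + h(K). -/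
open Complex Matrix Polynomial

/-!
Every `u k` is a root of the monic polynomial `P = ∏ (X - u k)` of degree `K`, so
`∑_{j<K} P_j u_k^j = -u_k^K`; multiplying by `a_k u_k^(p+1-K)` and summing over `k` is exactly the
`p`-th Yule–Walker equation for the reversed coefficient vector `h_q = P_(K-1-q)`. Uniqueness comes
from the factorisation `A = Vᵀ · diag a · W` with Vandermonde matrices `V`, `W` in the distinct
nodes `u k` and `(u k)⁻¹`.
-/

namespace Polynomial

theorem Monic.sum_range_coeff_mul_pow_of_isRoot {R : Type*} [CommRing R] {P : R[X]}
    (hP : P.Monic) {x : R} (hx : P.IsRoot x) :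
    ∑ i ∈ Finset.range P.natDegree, P.coeff i * x ^ i = -x ^ P.natDegree := by
  have h := hx.eq_zero
  rw [eval_eq_sum_range, Finset.sum_range_succ, hP.coeff_natDegree, one_mul] at h
  exact eq_neg_of_add_eq_zero_left h

theorem Monic.sum_zpow_sub_mul_coeff_rev_of_isRoot {F : Type*} [Field F] {P : F[X]} {n : ℕ}
    (hP : P.Monic) (hn : P.natDegree = n) {x : F} (hx₀ : x ≠ 0) (hx : P.IsRoot x) (m : ℤ) :
    ∑ q : Fin n, x ^ (m - ((q : ℕ) : ℤ)) * P.coeff (n - 1 - q) = -x ^ (m + 1) := by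
  have hsplit (q : Fin n) : x ^ (m - ((q : ℕ) : ℤ)) = x ^ (m + 1 - n) * x ^ (n - 1 - (q : ℕ)) := by
    have := q.isLt
    rw [← zpow_natCast, ← zpow_add₀ hx₀, Nat.cast_sub (by omega), Nat.cast_sub (by omega)]
    push_cast
    ring_nf
  calc ∑ q : Fin n, x ^ (m - ((q : ℕ) : ℤ)) * P.coeff (n - 1 - q)
      = x ^ (m + 1 - n) * ∑ j ∈ Finset.range n, P.coeff (n - 1 - j) * x ^ (n - 1 - j) := by
        rw [← Fin.sum_univ_eq_sum_range (fun j => P.coeff (n - 1 - j) * x ^ (n - 1 - j)),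
          Finset.mul_sum]
        exact Finset.sum_congr rfl fun q _ => by rw [hsplit]; ring
    _ = x ^ (m + 1 - n) * -x ^ n := by
        rw [Finset.sum_range_reflect (fun j => P.coeff j * x ^ j), ← hn,
          hP.sum_range_coeff_mul_pow_of_isRoot hx]
    _ = -x ^ (m + 1) := by
        rw [mul_neg, ← zpow_natCast, ← zpow_add₀ hx₀, sub_add_cancel]

end Polynomial

section YuleWalker

variable {F ι : Type*} [Field F] [Fintype ι]

/-- The Toeplitz matrix `(f̂(p - q))_{p,q}` of `f̂(λ) = ∑ k, a k * u k ^ λ`. -/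
def yuleWalkerMatrix (n : ℕ) (a u : ι → F) : Matrix (Fin n) (Fin n) F :=
  of fun p q => ∑ k, a k * u k ^ (((p : ℕ) : ℤ) - ((q : ℕ) : ℤ))

theorem yuleWalkerMatrix_mulVec_coeff_rev {n : ℕ} (a u : ι → F) (hu : ∀ k, u k ≠ 0)
    {P : F[X]} (hP : P.Monic) (hn : P.natDegree = n) (hroot : ∀ k, P.IsRoot (u k)) :
    yuleWalkerMatrix n a u *ᵥ (fun q => P.coeff (n - 1 - q)) =
      -fun p : Fin n => ∑ k, a k * u k ^ (((p : ℕ) : ℤ) + 1) := by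
  ext p
  simp only [yuleWalkerMatrix, mulVec, dotProduct, of_apply, Finset.sum_mul, Pi.neg_apply,
    ← Finset.sum_neg_distrib]
  rw [Finset.sum_comm]
  refine Finset.sum_congr rfl fun k _ => ?_
  simp only [mul_assoc, ← Finset.mul_sum,
    hP.sum_zpow_sub_mul_coeff_rev_of_isRoot hn (hu k) (hroot k), mul_neg]

theorem yuleWalkerMatrix_eq_vandermonde {n : ℕ} (a u : Fin n → F) (hu : ∀ k, u k ≠ 0) :
    yuleWalkerMatrix n a u = (vandermonde u)ᵀ * diagonal a * vandermonde fun k => (u k)⁻¹ := by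
  ext p q
  simp only [yuleWalkerMatrix, of_apply, mul_apply, transpose_apply, vandermonde_apply,
    diagonal_apply, mul_ite, mul_zero, Finset.sum_ite_eq', Finset.mem_univ, if_true]
  refine Finset.sum_congr rfl fun k _ => ?_
  rw [zpow_sub₀ (hu k), zpow_natCast, zpow_natCast, inv_pow, div_eq_mul_inv]
  ring

theorem isUnit_yuleWalkerMatrix {n : ℕ} {a u : Fin n → F} (ha : ∀ k, a k ≠ 0)
    (hu : ∀ k, u k ≠ 0) (hinj : Function.Injective u) : IsUnit (yuleWalkerMatrix n a u) := by
  rw [isUnit_iff_isUnit_det, isUnit_iff_ne_zero, yuleWalkerMatrix_eq_vandermonde a u hu,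
    det_mul, det_mul, det_transpose, det_diagonal]
  exact mul_ne_zero (mul_ne_zero (det_vandermonde_ne_zero_iff.2 hinj)
    (Finset.prod_ne_zero_iff.2 fun k _ => ha k))
    (det_vandermonde_ne_zero_iff.2 (inv_injective.comp hinj))

end YuleWalker

theorem stmt8_general (K : ℕ)
    (u : Fin K → ℂ) (hu : ∀ k, u k ≠ 0) (hdist : Function.Injective u)
    (a : Fin K → ℂ) (ha : ∀ k, a k ≠ 0)
    (A : Matrix (Fin K) (Fin K) ℂ)
    (hA : ∀ p q : Fin K, A p q = ∑ k, a k * u k ^ (((p : ℕ) : ℤ) - ((q : ℕ) : ℤ)))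
    (b : Fin K → ℂ)
    (hb : ∀ p : Fin K, b p = ∑ k, a k * u k ^ (((p : ℕ) : ℤ) + 1)) :
    (∃! h : Fin K → ℂ, A.mulVec h = -b) ∧
      A.mulVec (fun q : Fin K =>
        (∏ k, (Polynomial.X - Polynomial.C (u k))).coeff (K - 1 - (q : ℕ))) = -b := by
  set P : ℂ[X] := ∏ k, (X - C (u k))
  have hP : P.Monic := monic_prod_of_monic _ _ fun k _ => monic_X_sub_C (u k)
  have hdeg : P.natDegree = K := by simp [P, natDegree_finsetProd_X_sub_C_eq_card]
  have hroot (k : Fin K) : P.IsRoot (u k) :=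
    (isRoot_prod _ _ _).2 ⟨k, Finset.mem_univ k, root_X_sub_C.2 rfl⟩
  obtain rfl : A = yuleWalkerMatrix K a u := ext hA
  obtain rfl : b = fun p : Fin K => ∑ k, a k * u k ^ (((p : ℕ) : ℤ) + 1) := funext hb
  have hsol := yuleWalkerMatrix_mulVec_coeff_rev a u hu hP hdeg hroot
  have hinj := mulVec_injective_iff_isUnit.2 (isUnit_yuleWalkerMatrix ha hu hdist)
  exact ⟨⟨_, hsol, fun h hh => hinj (hh.trans hsol.symm)⟩, hsol⟩

/-- The Yule-Walker system A h = -b has a unique solution, given by the coefficients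
of the monic annihilating polynomial ∏ (z - u_k). -/
theorem stmt8 (K : ℕ) (hK : 1 ≤ K)
    (u : Fin K → ℂ) (hu : ∀ k, u k ≠ 0) (hdist : Function.Injective u)
    (a : Fin K → ℂ) (ha : ∀ k, a k ≠ 0)
    (A : Matrix (Fin K) (Fin K) ℂ)
    (hA : ∀ p q : Fin K, A p q = ∑ k, a k * u k ^ (((p : ℕ) : ℤ) - ((q : ℕ) : ℤ)))
    (b : Fin K → ℂ)
    (hb : ∀ p : Fin K, b p = ∑ k, a k * u k ^ (((p : ℕ) : ℤ) + 1)) :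
    (∃! h : Fin K → ℂ, A.mulVec h = -b) ∧
      A.mulVec (fun q : Fin K =>
        (∏ k, (Polynomial.X - Polynomial.C (u k))).coeff (K - 1 - (q : ℕ))) = -b :=
  stmt8_general K u hu hdist a ha A hA b hb
end

section
/- If f̂(λ) = Σ_{k=0}^{K-1} a_k u_k^λ with nonzero a_k and distinct nonzero u_k, then for any L ≥ K, the (L+1)×(L+1) Toeplitz matrix T with T_{p,q} = f̂(p-q) has rank exactly K. -/
open Complex Matrix

/-!
The Toeplitz matrix factors as `V * diagonal a * Wᵀ`, where `V` and `W` are the `(L+1) × K`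
matrices of powers of the `u k` and of the `(u k)⁻¹`; this bounds its rank by `K`. Its leading
`K × K` block is the `K × K` Toeplitz matrix of the same exponential sum, which factors through
two square Vandermonde matrices with distinct nodes and so is invertible.
-/

section ExpSumToeplitz

variable {F : Type*} [Field F] {K : ℕ}

def powerMatrix (u : Fin K → F) (m : ℕ) : Matrix (Fin m) (Fin K) F :=
  of fun p k => u k ^ (p : ℕ)

theorem powerMatrix_self (u : Fin K → F) : powerMatrix u K = (vandermonde u)ᵀ :=
  rfl

def expSumToeplitz (a u : Fin K → F) (m : ℕ) : Matrix (Fin m) (Fin m) F :=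
  of fun p q => ∑ k, a k * u k ^ (((p : ℕ) : ℤ) - ((q : ℕ) : ℤ))

theorem expSumToeplitz_submatrix_castLE (a u : Fin K → F) {n m : ℕ} (h : n ≤ m) :
    (expSumToeplitz a u m).submatrix (Fin.castLE h) (Fin.castLE h) = expSumToeplitz a u n :=
  rfl

theorem expSumToeplitz_eq_mul {a u : Fin K → F} (hu : ∀ k, u k ≠ 0) (m : ℕ) :
    expSumToeplitz a u m = powerMatrix u m * diagonal a * (powerMatrix u⁻¹ m)ᵀ := by
  ext p q
  rw [mul_apply]
  simp only [expSumToeplitz, powerMatrix, of_apply, mul_diagonal, transpose_apply,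
    Pi.inv_apply, zpow_sub₀ (hu _), zpow_natCast, div_eq_mul_inv, inv_pow]
  exact Finset.sum_congr rfl fun k _ => by ring

theorem det_expSumToeplitz_ne_zero {a u : Fin K → F} (ha : ∀ k, a k ≠ 0)
    (hu : ∀ k, u k ≠ 0) (hinj : Function.Injective u) : (expSumToeplitz a u K).det ≠ 0 := by
  have hdet_u : (vandermonde u).det ≠ 0 := det_vandermonde_ne_zero_iff.mpr hinj
  have hdet_inv : (vandermonde u⁻¹).det ≠ 0 :=
    det_vandermonde_ne_zero_iff.mpr (inv_injective.comp hinj)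
  rw [expSumToeplitz_eq_mul hu, det_mul, det_mul, det_diagonal, powerMatrix_self,
    powerMatrix_self, det_transpose, transpose_transpose]
  exact mul_ne_zero (mul_ne_zero hdet_u (Finset.prod_ne_zero_iff.mpr fun k _ => ha k)) hdet_inv

theorem rank_expSumToeplitz {a u : Fin K → F} (ha : ∀ k, a k ≠ 0) (hu : ∀ k, u k ≠ 0)
    (hinj : Function.Injective u) {m : ℕ} (hKm : K ≤ m) : (expSumToeplitz a u m).rank = K := by
  apply le_antisymm
  · rw [expSumToeplitz_eq_mul hu, Matrix.mul_assoc]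
    exact (rank_mul_le_left _ _).trans (rank_le_width _)
  · calc K = (expSumToeplitz a u K).rank := by
          rw [rank_of_det_ne_zero (det_expSumToeplitz_ne_zero ha hu hinj), Fintype.card_fin]
      _ ≤ (expSumToeplitz a u m).rank := by
          rw [← expSumToeplitz_submatrix_castLE a u hKm]
          exact rank_submatrix_le _ _ _

end ExpSumToeplitz

theorem stmt15_general (K L : ℕ) (hL : K ≤ L)
    (u : Fin K → ℂ) (hu : ∀ k, u k ≠ 0) (hdist : Function.Injective u)
    (a : Fin K → ℂ) (ha : ∀ k, a k ≠ 0)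
    (T : Matrix (Fin (L + 1)) (Fin (L + 1)) ℂ)
    (hT : ∀ p q : Fin (L + 1), T p q = ∑ k, a k * u k ^ (((p : ℕ) : ℤ) - ((q : ℕ) : ℤ))) :
    T.rank = K := by
  have hT_eq : T = expSumToeplitz a u (L + 1) := Matrix.ext hT
  rw [hT_eq]
  exact rank_expSumToeplitz ha hu hdist (Nat.le_succ_of_le hL)

/-- Any (L+1)×(L+1) Toeplitz matrix built from a K-term exponential sum, with L ≥ K,
has rank exactly K. -/
theorem stmt15 (K L : ℕ) (hK : 1 ≤ K) (hL : K ≤ L)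
    (u : Fin K → ℂ) (hu : ∀ k, u k ≠ 0) (hdist : Function.Injective u)
    (a : Fin K → ℂ) (ha : ∀ k, a k ≠ 0)
    (T : Matrix (Fin (L + 1)) (Fin (L + 1)) ℂ)
    (hT : ∀ p q : Fin (L + 1), T p q = ∑ k, a k * u k ^ (((p : ℕ) : ℤ) - ((q : ℕ) : ℤ))) :
    T.rank = K :=
  stmt15_general K L hL u hu hdist a ha T hT
end

section
/- Combining the pipeline: if s ∈ ℂ^M, M = 2M_0+1 ≥ 2K+1, is generated as s(m) = Σ_{λ=-M_0}^{M_0} ĝ(λ) f̂(λ) e^{2πiλm/M} with ĝ(λ) ≠ 0 for all λ and f̂(λ) = Σ_{k=0}^{K-1} a_k e^{-2πiλ t_k/M} with distinct t_k ∈ [0, M) and nonzero a_k, then the parameters {(a_k, t_k)}_{k=0}^{K-1} are uniquely determined by s (as a multiset). -/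
/-!
The observations are the centred inverse DFT of `ĝ · f̂` at the `M = 2M₀ + 1` distinct points
`e^{2πiλ/M}`, `|λ| ≤ M₀`, so a Vandermonde argument recovers `ĝ · f̂`, hence `f̂`, on `[-M₀, M₀]`.
The difference of the two spike trains `∑ a_k δ_{t_k}` is supported on at most `2K ≤ M` points of
`[0, M)`, where `t ↦ e^{-2πit/M}` is injective, and its Fourier coefficients vanish at `M`
consecutive frequencies; a second Vandermonde argument shows it is zero. A spike train with
distinct locations and nonzero amplitudes determines its multiset of (amplitude, location) pairs.
-/

open Complex Finset Real

theorem Finset.eq_zero_of_forall_sum_mul_pow_eq_zero {R ι : Type*} [CommRing R] [IsDomain R]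
    {S : Finset ι} {w c : ι → R} (hw : Set.InjOn w S)
    (h : ∀ n < #S, ∑ i ∈ S, c i * w i ^ n = 0) : ∀ i ∈ S, c i = 0 := by
  let e := S.equivFin
  have hreindex (g : ι → R) : ∑ j, g (e.symm j) = ∑ i ∈ S, g i :=
    (e.symm.sum_comp fun i : S => g i).trans (S.sum_coe_sort g)
  have hc : (fun j => c (e.symm j)) = 0 :=
    Matrix.eq_zero_of_forall_pow_sum_mul_pow_eq_zero
      (fun j₁ j₂ hj => e.symm.injective (Subtype.ext (hw (e.symm j₁).2 (e.symm j₂).2 hj)))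
      (fun n => (hreindex _).trans (h n n.2))
  intro i hi
  simpa using congrFun hc (e ⟨i, hi⟩)

theorem Finset.eq_zero_of_forall_sum_mul_zpow_eq_zero {K ι : Type*} [Field K]
    {S : Finset ι} {w c : ι → K} (hw : Set.InjOn w S) (hw₀ : ∀ i ∈ S, w i ≠ 0)
    (y₀ : ℤ) {n : ℕ} (hn : #S ≤ n) (h : ∀ j < n, ∑ i ∈ S, c i * w i ^ (y₀ + j) = 0) :
    ∀ i ∈ S, c i = 0 := by
  have hshift : ∀ i ∈ S, c i * w i ^ y₀ = 0 :=
    eq_zero_of_forall_sum_mul_pow_eq_zero hw fun j hj => by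
      rw [← h j (hj.trans_le hn)]
      refine sum_congr rfl fun i hi => ?_
      rw [zpow_add₀ (hw₀ i hi), zpow_natCast, mul_assoc]
  exact fun i hi => (mul_eq_zero.mp (hshift i hi)).resolve_right (zpow_ne_zero _ (hw₀ i hi))

theorem Complex.eq_of_exp_two_pi_I_mul_div_eq {N x y : ℝ} (hxy : |x - y| < N)
    (h : exp (2 * π * I * x / N) = exp (2 * π * I * y / N)) : x = y := by
  have hN : 0 < N := (abs_nonneg _).trans_lt hxy
  have hN' : (N : ℂ) ≠ 0 := by exact_mod_cast hN.ne'
  obtain ⟨n, hn⟩ := exp_eq_exp_iff_exists_int.mp h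
  have hsub : x - y = n * N := by
    have : ((x - y : ℝ) : ℂ) = ((n * N : ℝ) : ℂ) := by
      push_cast
      field_simp at hn
      linear_combination hn
    exact_mod_cast this
  have : |(n : ℝ)| < 1 := by
    rw [hsub, abs_mul, abs_of_pos hN] at hxy
    nlinarith
  rw [← Int.cast_abs, ← Int.cast_one, Int.cast_lt, Int.abs_lt_one_iff] at this
  simpa [this, sub_eq_zero] using hsub

theorem eqOn_Icc_of_centered_dft_eq {M₀ : ℕ} {c c' : ℤ → ℂ}
    (h : ∀ m : Fin (2 * M₀ + 1),
      ∑ l ∈ Icc (-(M₀ : ℤ)) M₀, c l * exp (2 * π * I * l * (m : ℕ) / (2 * M₀ + 1 : ℕ))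
        = ∑ l ∈ Icc (-(M₀ : ℤ)) M₀, c' l * exp (2 * π * I * l * (m : ℕ) / (2 * M₀ + 1 : ℕ))) :
    ∀ l ∈ Icc (-(M₀ : ℤ)) M₀, c l = c' l := by
  set N := 2 * M₀ + 1
  have hcard : #(Icc (-(M₀ : ℤ)) M₀) = N := by simp only [Int.card_Icc]; omega
  have hw : Set.InjOn (fun l : ℤ => exp (2 * π * I * (l : ℝ) / (N : ℝ))) (Icc (-(M₀ : ℤ)) M₀) := by
    intro l₁ hl₁ l₂ hl₂ hl
    simp only [coe_Icc, Set.mem_Icc] at hl₁ hl₂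
    refine Int.cast_injective (eq_of_exp_two_pi_I_mul_div_eq ?_ hl)
    rw [← Int.cast_sub, ← Int.cast_abs, ← Int.cast_natCast, Int.cast_lt, abs_lt]
    omega
  intro l hl
  refine sub_eq_zero.mp <| eq_zero_of_forall_sum_mul_zpow_eq_zero (c := c - c') hw
    (fun _ _ => exp_ne_zero _) 0 hcard.le (fun j hj => ?_) l hl
  rw [← sub_eq_zero.mpr (h ⟨j, hj⟩), ← sum_sub_distrib]
  refine sum_congr rfl fun l _ => ?_
  rw [Pi.sub_apply, ← sub_mul, zero_add, ← exp_int_mul]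
  push_cast
  ring_nf

theorem Finsupp.sum_single_apply {ι α M : Type*} [Fintype ι] [AddCommMonoid M] [DecidableEq α]
    (t : ι → α) (a : ι → M) (x : α) :
    (∑ k, single (t k) (a k)) x = ∑ k, if t k = x then a k else 0 := by
  simp only [finsetSum_apply, single_apply]

theorem Finsupp.sum_sum_single_apply_mul {ι α R : Type*} [Fintype ι] [CommSemiring R]
    {t : ι → α} {S : Finset α} (hS : ∀ k, t k ∈ S) (a : ι → R) (g : α → R) :
    ∑ x ∈ S, (∑ k, single (t k) (a k)) x * g x = ∑ k, a k * g (t k) := by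
  classical
  simp only [sum_single_apply, Finset.sum_mul, ite_mul, zero_mul]
  rw [Finset.sum_comm]
  exact Finset.sum_congr rfl fun k _ => by rw [Finset.sum_ite_eq S (t k), if_pos (hS k)]

theorem Finsupp.sum_single_eq_of_eqOn {ι ι' α M : Type*} [Fintype ι] [Fintype ι']
    [AddCommMonoid M] {t : ι → α} {t' : ι' → α} {a : ι → M} {a' : ι' → M} {S : Finset α}
    (hS : ∀ k, t k ∈ S) (hS' : ∀ k, t' k ∈ S)
    (h : ∀ x ∈ S, (∑ k, single (t k) (a k)) x = (∑ k, single (t' k) (a' k)) x) :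
    ∑ k, single (t k) (a k) = ∑ k, single (t' k) (a' k) := by
  classical
  ext x
  by_cases hx : x ∈ S
  · exact h x hx
  · have hxt : ∀ k, t k ≠ x := fun k hk => hx (hk ▸ hS k)
    have hxt' : ∀ k, t' k ≠ x := fun k hk => hx (hk ▸ hS' k)
    simp [sum_single_apply, hxt, hxt']

theorem sum_single_eq_of_exp_sum_eq {ι ι' : Type*} [Fintype ι] [Fintype ι'] {M₀ : ℕ}
    (hcard : Fintype.card ι + Fintype.card ι' ≤ 2 * M₀ + 1)
    {a : ι → ℂ} {a' : ι' → ℂ} {t : ι → ℝ} {t' : ι' → ℝ}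
    (ht : ∀ k, t k ∈ Set.Ico (0 : ℝ) ((2 * M₀ + 1 : ℕ) : ℝ))
    (ht' : ∀ k, t' k ∈ Set.Ico (0 : ℝ) ((2 * M₀ + 1 : ℕ) : ℝ))
    (h : ∀ l ∈ Icc (-(M₀ : ℤ)) M₀,
      ∑ k, a k * exp (-2 * π * I * l * (t k : ℂ) / (2 * M₀ + 1 : ℕ))
        = ∑ k, a' k * exp (-2 * π * I * l * (t' k : ℂ) / (2 * M₀ + 1 : ℕ))) :
    ∑ k, Finsupp.single (t k) (a k) = ∑ k, Finsupp.single (t' k) (a' k) := by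
  classical
  set N := 2 * M₀ + 1
  set S := univ.image t ∪ univ.image t'
  have hmem : ∀ k, t k ∈ S := fun k => mem_union_left _ (mem_image_of_mem t (mem_univ k))
  have hmem' : ∀ k, t' k ∈ S := fun k => mem_union_right _ (mem_image_of_mem t' (mem_univ k))
  have hS : ∀ x ∈ S, x ∈ Set.Ico (0 : ℝ) N := by
    simp only [S, mem_union, mem_image, mem_univ, true_and]
    rintro x (⟨k, rfl⟩ | ⟨k, rfl⟩)
    exacts [ht k, ht' k]
  have hcardS : #S ≤ N :=
    calc #S ≤ #(univ.image t) + #(univ.image t') := card_union_le _ _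
      _ ≤ Fintype.card ι + Fintype.card ι' := add_le_add card_image_le card_image_le
      _ ≤ N := hcard
  set w : ℝ → ℂ := fun x => exp (2 * π * I * (-x : ℝ) / (N : ℝ))
  have hw : Set.InjOn w S := by
    intro x hx y hy hxy
    obtain ⟨hx₀, hxN⟩ := hS x hx
    obtain ⟨hy₀, hyN⟩ := hS y hy
    refine neg_injective (eq_of_exp_two_pi_I_mul_div_eq ?_ hxy)
    rw [abs_lt]
    constructor <;> linarith
  have hzero := eq_zero_of_forall_sum_mul_zpow_eq_zero
    (c := ⇑(∑ k, Finsupp.single (t k) (a k) - ∑ k, Finsupp.single (t' k) (a' k)))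
    hw (fun _ _ => exp_ne_zero _) (-M₀) hcardS (fun j hj => ?_)
  · exact Finsupp.sum_single_eq_of_eqOn hmem hmem' fun x hx =>
      sub_eq_zero.mp (by simpa using hzero x hx)
  · have hl : -(M₀ : ℤ) + j ∈ Icc (-(M₀ : ℤ)) M₀ := by rw [mem_Icc]; omega
    have hexp (x : ℝ) : w x ^ (-(M₀ : ℤ) + j) =
        exp (-2 * π * I * ((-(M₀ : ℤ) + j : ℤ) : ℂ) * (x : ℂ) / (N : ℕ)) := by
      rw [← exp_int_mul]
      push_cast
      ring_nf
    simp only [Finsupp.coe_sub, Pi.sub_apply, sub_mul, sum_sub_distrib, hexp,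
      Finsupp.sum_sum_single_apply_mul hmem, Finsupp.sum_sum_single_apply_mul hmem', h _ hl,
      sub_self]

theorem Finsupp.map_pair_eq_map_support {ι α M : Type*} [Fintype ι] [AddCommMonoid M]
    {t : ι → α} (ht : Function.Injective t) {a : ι → M} (ha : ∀ k, a k ≠ 0) :
    univ.val.map (fun k => (a k, t k)) =
      (∑ k, single (t k) (a k)).support.val.map fun x => ((∑ k, single (t k) (a k)) x, x) := by
  classical
  set F := ∑ k, single (t k) (a k)
  have hF (k : ι) : F (t k) = a k := by simp [F, sum_single_apply, ht.eq_iff]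
  have hsupp : F.support = univ.map ⟨t, ht⟩ := by
    ext x
    simp only [mem_support_iff, mem_map, mem_univ, true_and, Function.Embedding.coeFn_mk]
    constructor
    · contrapose!
      intro hx
      simp [F, sum_single_apply, hx]
    · rintro ⟨k, rfl⟩
      exact hF k ▸ ha k
  rw [hsupp, map_val, Multiset.map_map]
  exact Multiset.map_congr rfl fun k _ => by simp [hF]

theorem multiset_map_eq_of_sum_single_eq {ι ι' α M : Type*} [Fintype ι] [Fintype ι']
    [AddCommMonoid M] {t : ι → α} {t' : ι' → α} {a : ι → M} {a' : ι' → M}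
    (ht : Function.Injective t) (ht' : Function.Injective t') (ha : ∀ k, a k ≠ 0)
    (ha' : ∀ k, a' k ≠ 0)
    (h : ∑ k, Finsupp.single (t k) (a k) = ∑ k, Finsupp.single (t' k) (a' k)) :
    univ.val.map (fun k => (a k, t k)) = univ.val.map (fun k => (a' k, t' k)) := by
  rw [Finsupp.map_pair_eq_map_support ht ha, Finsupp.map_pair_eq_map_support ht' ha', h]

theorem stmt17_general (K M0 : ℕ) (hM0 : K ≤ M0)
    (ghat : ℤ → ℂ) (hg : ∀ lam ∈ Finset.Icc (-(M0 : ℤ)) (M0 : ℤ), ghat lam ≠ 0)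
    (a a' : Fin K → ℂ) (ha : ∀ k, a k ≠ 0) (ha' : ∀ k, a' k ≠ 0)
    (t t' : Fin K → ℝ)
    (ht : ∀ k, t k ∈ Set.Ico (0 : ℝ) ((2 * M0 + 1 : ℕ) : ℝ))
    (ht' : ∀ k, t' k ∈ Set.Ico (0 : ℝ) ((2 * M0 + 1 : ℕ) : ℝ))
    (htd : Function.Injective t) (htd' : Function.Injective t')
    (hs : ∀ m : Fin (2 * M0 + 1),
      ∑ lam ∈ Finset.Icc (-(M0 : ℤ)) (M0 : ℤ), ghat lam *
        (∑ k, a k * Complex.exp (-2 * Real.pi * Complex.I * (lam : ℂ) * ((t k : ℝ) : ℂ) / ((2 * M0 + 1 : ℕ) : ℂ)))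
        * Complex.exp (2 * Real.pi * Complex.I * (lam : ℂ) * ((m : ℕ) : ℂ) / ((2 * M0 + 1 : ℕ) : ℂ))
      = ∑ lam ∈ Finset.Icc (-(M0 : ℤ)) (M0 : ℤ), ghat lam *
        (∑ k, a' k * Complex.exp (-2 * Real.pi * Complex.I * (lam : ℂ) * ((t' k : ℝ) : ℂ) / ((2 * M0 + 1 : ℕ) : ℂ)))
        * Complex.exp (2 * Real.pi * Complex.I * (lam : ℂ) * ((m : ℕ) : ℂ) / ((2 * M0 + 1 : ℕ) : ℂ))) :
    Multiset.map (fun k => (a k, t k)) Finset.univ.val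
      = Multiset.map (fun k => (a' k, t' k)) Finset.univ.val := by
  have hfhat := eqOn_Icc_of_centered_dft_eq hs
  refine multiset_map_eq_of_sum_single_eq htd htd' ha ha' (sum_single_eq_of_exp_sum_eq ?_ ht ht' ?_)
  · simp only [Fintype.card_fin]
    omega
  · exact fun l hl => mul_left_cancel₀ (hg l hl) (hfhat l hl)

/-- End-to-end noiseless recovery: the parameters (a_k, t_k) are uniquely determined
(as a multiset) by the M = 2M0+1 ≥ 2K+1 observations s(m). -/
theorem stmt17 (K M0 : ℕ) (hK : 1 ≤ K) (hM0 : K ≤ M0)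
    (ghat : ℤ → ℂ) (hg : ∀ lam ∈ Finset.Icc (-(M0 : ℤ)) (M0 : ℤ), ghat lam ≠ 0)
    (a a' : Fin K → ℂ) (ha : ∀ k, a k ≠ 0) (ha' : ∀ k, a' k ≠ 0)
    (t t' : Fin K → ℝ)
    (ht : ∀ k, t k ∈ Set.Ico (0 : ℝ) ((2 * M0 + 1 : ℕ) : ℝ))
    (ht' : ∀ k, t' k ∈ Set.Ico (0 : ℝ) ((2 * M0 + 1 : ℕ) : ℝ))
    (htd : Function.Injective t) (htd' : Function.Injective t')
    (hs : ∀ m : Fin (2 * M0 + 1),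
      ∑ lam ∈ Finset.Icc (-(M0 : ℤ)) (M0 : ℤ), ghat lam *
        (∑ k, a k * Complex.exp (-2 * Real.pi * Complex.I * (lam : ℂ) * ((t k : ℝ) : ℂ) / ((2 * M0 + 1 : ℕ) : ℂ)))
        * Complex.exp (2 * Real.pi * Complex.I * (lam : ℂ) * ((m : ℕ) : ℂ) / ((2 * M0 + 1 : ℕ) : ℂ))
      = ∑ lam ∈ Finset.Icc (-(M0 : ℤ)) (M0 : ℤ), ghat lam *
        (∑ k, a' k * Complex.exp (-2 * Real.pi * Complex.I * (lam : ℂ) * ((t' k : ℝ) : ℂ) / ((2 * M0 + 1 : ℕ) : ℂ)))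
        * Complex.exp (2 * Real.pi * Complex.I * (lam : ℂ) * ((m : ℕ) : ℂ) / ((2 * M0 + 1 : ℕ) : ℂ))) :
    Multiset.map (fun k => (a k, t k)) Finset.univ.val
      = Multiset.map (fun k => (a' k, t' k)) Finset.univ.val :=
  stmt17_general K M0 hM0 ghat hg a a' ha ha' t t' ht ht' htd htd' hs
end
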